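/- If there are at most two attributes (k ≤ 2), then the maximum of ∑_{b ∈ O} r(b) over all attribute hiding schemes O is attained by a tree-structured scheme; that is, there exists a tree-structured scheme O* such that for every attribute hiding scheme O, ∑_{b ∈ O} r(b) ≤ ∑_{b ∈ O*} r(b). -/

import Mathlib

/-- A natural bundle: each attribute either takes a specific value (`some a`) or is
hidden (`none`). -/
abbrev Bundle (k : ℕ) (C : Fin k → ℕ) := ∀ i : Fin k, Option (Fin (C i))

/-- The set of instantiations belonging to a natural bundle. -/
def members {k : ℕ} {C : Fin k → ℕ} (b : Bundle k C) : Finset (∀ i : Fin k, Fin (C i)) :=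
  Finset.univ.filter fun ω => ∀ i, b i = none ∨ b i = some (ω i)

/-- An attribute hiding scheme: a finite set of natural bundles with pairwise disjoint
member sets. -/
def IsScheme {k : ℕ} {C : Fin k → ℕ} (O : Finset (Bundle k C)) : Prop :=
  ∀ b ∈ O, ∀ b' ∈ O, b ≠ b' → Disjoint (members b) (members b')

/-- `splitB b x` : the bundles obtained from `b` by revealing the hidden attribute `x`. -/
def splitB {k : ℕ} {C : Fin k → ℕ} (b : Bundle k C) (x : Fin k) : Finset (Bundle k C) :=
  Finset.univ.image fun j : Fin (C x) => Function.update b x (some j)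

/-- Tree-structured schemes: obtained from `{⊤}` (all attributes hidden) by recursively
splitting a bundle along one of its hidden attributes. -/
inductive IsTree (k : ℕ) (C : Fin k → ℕ) : Finset (Bundle k C) → Prop
  | top : IsTree k C {(fun _ => none : Bundle k C)}
  | split (O : Finset (Bundle k C)) (b : Bundle k C) (x : Fin k) :
      IsTree k C O → b ∈ O → b x = none → IsTree k C ((O.erase b) ∪ splitB b x)

/-- The pairs of distinct bidders. -/
def pairs (n : ℕ) : Finset (Fin n × Fin n) := Finset.univ.filter fun p => p.1 ≠ p.2

theorem pairs_nonempty {n : ℕ} (hn : 2 ≤ n) : (pairs n).Nonempty := by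
  refine ⟨(⟨0, by omega⟩, ⟨1, by omega⟩), ?_⟩
  simp only [pairs, Finset.mem_filter, Finset.mem_univ, true_and]
  intro h
  simpa using congrArg Fin.val h

/-- The second price of a bundle of instantiations: the max over pairs of distinct
bidders of the min of the two bidders' (additive) values for the bundle. -/
noncomputable def sp {n : ℕ} (hn : 2 ≤ n) {Ω : Type*} (v : Fin n → Ω → ℝ) (B : Finset Ω) : ℝ :=
  (pairs n).sup' (pairs_nonempty hn) fun p => min (∑ ω ∈ B, v p.1 ω) (∑ ω ∈ B, v p.2 ω)

/-- The unit bundle of an instantiation `ω`: no attribute is hidden. -/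
def unitB {k : ℕ} {C : Fin k → ℕ} (ω : ∀ i : Fin k, Fin (C i)) : Bundle k C :=
  fun i => some (ω i)

/-- The marginal revenue `r b`: the extra revenue obtained by selling `b` as a bundle
rather than selling its instantiations separately. -/
noncomputable def rMarg {k : ℕ} {C : Fin k → ℕ} {n : ℕ} (hn : 2 ≤ n)
    (v : Fin n → (∀ i : Fin k, Fin (C i)) → ℝ) (b : Bundle k C) : ℝ :=
  sp hn v (members b) - ∑ ω ∈ members b, sp hn v (members (unitB ω))

/-!
Marginal revenue vanishes on bundles with no hidden attribute, so only ⊤ and the "lines"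
`splitB ⊤ x` (attribute `x` revealed, all others hidden) matter when `k ≤ 2`. A scheme containing ⊤
is `{⊤}`, and two lines revealing different attributes always intersect; hence the revenue of any
scheme is at most `r ⊤` or `∑_{b ∈ splitB ⊤ x} (r b)⁺` for one `x`. Each of these bounds is attained
by a tree: repeated splitting dissolves any bundles of a tree into bundles with nothing hidden,
so a tree can trade its bundles of negative marginal revenue for ones of revenue zero.
-/

open Finset Function

section

variable {k : ℕ} {C : Fin k → ℕ}

abbrev Bundle.top : Bundle k C := fun _ => none

def Bundle.hiddenAttrs (b : Bundle k C) : Finset (Fin k) := univ.filter fun i => b i = none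

open Bundle

theorem mem_members {b : Bundle k C} {ω : ∀ i : Fin k, Fin (C i)} :
    ω ∈ members b ↔ ∀ i, b i = none ∨ b i = some (ω i) := by
  simp [members]

theorem members_nonempty (hC : ∀ i, 0 < C i) (b : Bundle k C) : (members b).Nonempty :=
  ⟨fun i => (b i).getD ⟨0, hC i⟩, mem_members.2 fun i => by cases b i <;> simp⟩

theorem members_update_subset {b : Bundle k C} {x : Fin k} (hbx : b x = none)
    (j : Fin (C x)) : members (update b x (some j)) ⊆ members b := by
  intro ω hω
  refine mem_members.2 fun i => ?_
  rcases eq_or_ne i x with rfl | hi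
  · exact .inl hbx
  · simpa [update_of_ne hi] using mem_members.1 hω i

theorem disjoint_members_update (b : Bundle k C) (x : Fin k) {j j' : Fin (C x)}
    (hjj' : j ≠ j') :
    Disjoint (members (update b x (some j))) (members (update b x (some j'))) := by
  refine disjoint_left.2 fun ω hω hω' => hjj' ?_
  have h := mem_members.1 hω x
  have h' := mem_members.1 hω' x
  simp only [update_self, reduceCtorEq, false_or, Option.some.injEq] at h h'
  rw [h, h']

theorem members_unitB (ω : ∀ i : Fin k, Fin (C i)) : members (unitB ω) = {ω} := by
  ext ω'
  simp [mem_members, unitB, funext_iff, eq_comm]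

theorem exists_eq_unitB {b : Bundle k C} (hb : ∀ i, b i ≠ none) : ∃ ω, b = unitB ω :=
  ⟨fun i => (b i).get (Option.isSome_iff_ne_none.2 (hb i)), by funext i; simp [unitB]⟩

theorem card_hiddenAttrs_update {b : Bundle k C} {x : Fin k} (hbx : b x = none)
    (j : Fin (C x)) : #(hiddenAttrs (update b x (some j))) + 1 = #(hiddenAttrs b) := by
  have : hiddenAttrs (update b x (some j)) = (hiddenAttrs b).erase x := by
    ext i
    rcases eq_or_ne i x with rfl | hi <;> simp [hiddenAttrs, update_of_ne, *]
  rw [this, card_erase_add_one (by simpa [hiddenAttrs] using hbx)]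

theorem mem_splitB {b c : Bundle k C} {x : Fin k} :
    c ∈ splitB b x ↔ ∃ j, update b x (some j) = c := by
  simp [splitB]

theorem IsTree.isScheme {O : Finset (Bundle k C)} (hO : IsTree k C O) : IsScheme O := by
  induction hO with
  | top => intro b hb b' hb' hne; simp_all
  | split O b x _ hb hbx ih =>
    have hchild : ∀ c ∈ O.erase b ∪ splitB b x, ∀ c' ∈ splitB b x, c ≠ c' →
        Disjoint (members c) (members c') := by
      intro c hc c' hc' hne
      obtain ⟨j', rfl⟩ := mem_splitB.1 hc'
      rcases mem_union.1 hc with hc | hc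
      · obtain ⟨hcb, hcO⟩ := mem_erase.1 hc
        exact (ih c hcO b hb hcb).mono_right (members_update_subset hbx j')
      · obtain ⟨j, rfl⟩ := mem_splitB.1 hc
        exact disjoint_members_update b x fun h => hne (h ▸ rfl)
    intro c hc c' hc' hne
    rcases mem_union.1 hc' with hc' | hc'
    · rcases mem_union.1 hc with hc | hc
      · exact ih c (mem_erase.1 hc).2 c' (mem_erase.1 hc').2 hne
      · exact (hchild c' (mem_union_left _ hc') c hc hne.symm).symm
    · exact hchild c hc c' hc' hne

theorem IsScheme.disjoint_splitB (hC : ∀ i, 0 < C i) {O : Finset (Bundle k C)}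
    (hO : IsScheme O) {b : Bundle k C} (hb : b ∈ O) {x : Fin k} (hbx : b x = none) :
    Disjoint (splitB b x) O := by
  refine disjoint_left.2 fun c hc hcO => ?_
  obtain ⟨j, rfl⟩ := mem_splitB.1 hc
  have hne : update b x (some j) ≠ b := fun h => by simpa [hbx] using congrFun h x
  have hdisj := (hO _ hcO b hb hne).mono_right (members_update_subset hbx j)
  exact (members_nonempty hC _).ne_empty (disjoint_self.1 hdisj)

theorem sum_pow_card_hiddenAttrs_splitB_lt {b : Bundle k C} {x : Fin k} (hbx : b x = none) :
    ∑ c ∈ splitB b x, (Fintype.card (Bundle k C) + 1) ^ #(hiddenAttrs c) <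
      (Fintype.card (Bundle k C) + 1) ^ #(hiddenAttrs b) := by
  set M := Fintype.card (Bundle k C) + 1
  obtain ⟨d, hd⟩ := Nat.exists_eq_succ_of_ne_zero
    (card_ne_zero_of_mem (s := hiddenAttrs b) (by simpa [hiddenAttrs] using hbx))
  have hK : ∀ c ∈ splitB b x, M ^ #(hiddenAttrs c) = M ^ d := by
    intro c hc
    obtain ⟨j, rfl⟩ := mem_splitB.1 hc
    have := card_hiddenAttrs_update hbx j
    rw [show #(hiddenAttrs (update b x (some j))) = d by omega]
  rw [sum_congr rfl hK, sum_const, smul_eq_mul, hd, pow_succ']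
  exact Nat.mul_lt_mul_of_pos_right (Nat.lt_succ_of_le (card_le_univ _)) (by positivity)

theorem IsTree.exists_dissolve (hC : ∀ i, 0 < C i) {O S : Finset (Bundle k C)}
    (hO : IsTree k C O) (hS : S ⊆ O) :
    ∃ O', IsTree k C O' ∧ O \ S ⊆ O' ∧ ∀ c ∈ O', c ∉ O \ S → ∀ i, c i ≠ none := by
  induction h : ∑ b ∈ S, (Fintype.card (Bundle k C) + 1) ^ #(hiddenAttrs b)
    using Nat.strong_induction_on generalizing O S with
  | _ N ih =>
  by_cases hrev : ∀ b ∈ S, ∀ i, b i ≠ none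
  · exact ⟨O, hO, sdiff_subset, fun c hc hcS => hrev c (by simp_all)⟩
  push Not at hrev
  obtain ⟨b, hbS, x, hbx⟩ := hrev
  have hbO := hS hbS
  have hK := hO.isScheme.disjoint_splitB hC hbO hbx
  have hdiff : (O.erase b ∪ splitB b x) \ (S.erase b ∪ splitB b x) = O \ S := by
    ext c
    have hcK : c ∈ splitB b x → c ∉ O := fun h => disjoint_left.1 hK h
    rcases eq_or_ne c b with rfl | hcb
    · simp [hbS]
    · simp only [mem_sdiff, mem_union, mem_erase, ne_eq, hcb, not_false_eq_true, true_and]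
      tauto
  have hlt : ∑ c ∈ S.erase b ∪ splitB b x,
      (Fintype.card (Bundle k C) + 1) ^ #(hiddenAttrs c) < N := by
    rw [← h, ← add_sum_erase S _ hbS]
    have := sum_union_inter (s₁ := S.erase b) (s₂ := splitB b x)
      (f := fun c => (Fintype.card (Bundle k C) + 1) ^ #(hiddenAttrs c))
    have := sum_pow_card_hiddenAttrs_splitB_lt hbx
    omega
  obtain ⟨O', hO', hsub, hrevealed⟩ := ih _ hlt (hO.split O b x hbO hbx)
    (union_subset_union (erase_subset_erase b hS) subset_rfl) rfl
  rw [hdiff] at hsub hrevealed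
  exact ⟨O', hO', hsub, hrevealed⟩

theorem IsTree.exists_sum_eq_sum_posPart (hC : ∀ i, 0 < C i) {f : Bundle k C → ℝ}
    (hf : ∀ b, (∀ i, b i ≠ none) → f b = 0) {T : Finset (Bundle k C)} (hT : IsTree k C T) :
    ∃ T', IsTree k C T' ∧ ∑ b ∈ T', f b = ∑ b ∈ T, (f b)⁺ := by
  have hneg : {b ∈ T | f b < 0} ⊆ T := filter_subset _ T
  obtain ⟨T', hT', hsub, hrev⟩ := hT.exists_dissolve hC hneg
  refine ⟨T', hT', ?_⟩
  have hzero : ∑ b ∈ T with f b < 0, (f b)⁺ = 0 :=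
    sum_eq_zero fun b hb => posPart_eq_zero.2 (mem_filter.1 hb).2.le
  rw [← sum_subset hsub fun c hc hc' => hf c (hrev c hc hc'), ← sum_sdiff hneg, hzero, add_zero]
  refine sum_congr rfl fun b hb => (posPart_eq_self.2 (not_lt.1 fun h => ?_)).symm
  obtain ⟨hbT, hb⟩ := mem_sdiff.1 hb
  exact hb (mem_filter.2 ⟨hbT, h⟩)

theorem rMarg_eq_zero {n : ℕ} (hn : 2 ≤ n) (v : Fin n → (∀ i : Fin k, Fin (C i)) → ℝ)
    {b : Bundle k C} (hb : ∀ i, b i ≠ none) : rMarg hn v b = 0 := by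
  obtain ⟨ω, rfl⟩ := exists_eq_unitB hb
  simp [rMarg, members_unitB]

theorem mem_splitB_top {b : Bundle k C} {x : Fin k} :
    b ∈ splitB top x ↔ b x ≠ none ∧ ∀ i ≠ x, b i = none := by
  rw [mem_splitB]
  constructor
  · rintro ⟨j, rfl⟩
    exact ⟨by simp, fun i hi => by simp [update_of_ne hi]⟩
  · rintro ⟨hx, hothers⟩
    obtain ⟨j, hj⟩ := Option.ne_none_iff_exists'.1 hx
    refine ⟨j, funext fun i => ?_⟩
    rcases eq_or_ne i x with rfl | hi
    · simp [hj]
    · simp [update_of_ne hi, hothers i hi]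

theorem Fin.eq_or_eq_of_ne_of_le_two (hk : k ≤ 2) {x y : Fin k} (hxy : x ≠ y) (i : Fin k) :
    i = x ∨ i = y := by
  rw [Ne, Fin.ext_iff] at hxy
  simp only [Fin.ext_iff]
  omega

theorem exists_mem_splitB_top (hk : k ≤ 2) {b : Bundle k C} (hb : b ≠ top) {y : Fin k}
    (hy : b y = none) : ∃ x, b ∈ splitB top x := by
  obtain ⟨x, hx⟩ : ∃ x, b x ≠ none := by
    by_contra h
    push Not at h
    exact hb (funext h)
  refine ⟨x, mem_splitB_top.2 ⟨hx, fun i hi => ?_⟩⟩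
  have hxy : x ≠ y := by rintro rfl; exact hx hy
  rcases Fin.eq_or_eq_of_ne_of_le_two hk hxy i with rfl | rfl
  · exact absurd rfl hi
  · exact hy

theorem not_disjoint_members_of_mem_splitB_top (hC : ∀ i, 0 < C i) {b b' : Bundle k C}
    {x : Fin k} (hb : b ∈ splitB top x) (hb' : b' x = none) :
    ¬Disjoint (members b) (members b') := by
  obtain ⟨j, rfl⟩ := mem_splitB.1 hb
  obtain ⟨ω, hω⟩ := members_nonempty hC b'
  refine not_disjoint_iff.2 ⟨update ω x j, mem_members.2 fun i => ?_, mem_members.2 fun i => ?_⟩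
  · rcases eq_or_ne i x with rfl | hi
    · simp
    · simp [update_of_ne hi]
  · rcases eq_or_ne i x with rfl | hi
    · exact .inl hb'
    · simpa [update_of_ne hi] using mem_members.1 hω i

theorem IsScheme.eq_singleton_top (hC : ∀ i, 0 < C i) {O : Finset (Bundle k C)}
    (hO : IsScheme O) (htop : top ∈ O) : O = {top} := by
  refine eq_singleton_iff_unique_mem.2 ⟨htop, fun b hb => by_contra fun hne => ?_⟩
  have hdisj := (hO b hb top htop hne).mono_right (b := members b)
    fun _ _ => mem_members.2 fun _ => .inl rfl
  exact (members_nonempty hC b).ne_empty (disjoint_self.1 hdisj)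

theorem IsScheme.mem_splitB_top_of_mem_splitB_top (hk : k ≤ 2) (hC : ∀ i, 0 < C i)
    {O : Finset (Bundle k C)} (hO : IsScheme O) (htop : top ∉ O) {b c : Bundle k C} {x : Fin k}
    (hb : b ∈ O) (hbx : b ∈ splitB top x) (hc : c ∈ O) {y : Fin k} (hcy : c y = none) :
    c ∈ splitB top x := by
  obtain ⟨x', hx'⟩ := exists_mem_splitB_top hk (ne_of_mem_of_not_mem hc htop) hcy
  rcases eq_or_ne x' x with rfl | hne
  · exact hx'
  have hcx : c x = none := (mem_splitB_top.1 hx').2 x hne.symm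
  have hbc : b ≠ c := fun h => (mem_splitB_top.1 hbx).1 (h ▸ hcx)
  exact absurd (hO b hb c hc hbc) (not_disjoint_members_of_mem_splitB_top hC hbx hcx)

def candidates (k : ℕ) (C : Fin k → ℕ) : Finset (Finset (Bundle k C)) :=
  insert {top} (univ.image (splitB top))

theorem isTree_of_mem_candidates {T : Finset (Bundle k C)} (hT : T ∈ candidates k C) :
    IsTree k C T := by
  rcases mem_insert.1 hT with rfl | hT
  · exact IsTree.top
  · obtain ⟨x, -, rfl⟩ := mem_image.1 hT
    simpa using IsTree.split _ _ x IsTree.top (mem_singleton_self _) rfl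

theorem IsScheme.exists_candidate_sum_le (hk : k ≤ 2) (hC : ∀ i, 0 < C i)
    {f : Bundle k C → ℝ} (hf : ∀ b, (∀ i, b i ≠ none) → f b = 0) {O : Finset (Bundle k C)}
    (hO : IsScheme O) : ∃ T ∈ candidates k C, ∑ b ∈ O, f b ≤ ∑ b ∈ T, (f b)⁺ := by
  have hsum : ∑ b ∈ O, f b = ∑ b ∈ O with ∃ i, b i = none, f b := by
    refine (sum_filter_of_ne fun b _ hb => ?_).symm
    by_contra h
    push Not at h
    exact hb (hf b h)
  by_cases htop : top ∈ O
  · refine ⟨{top}, mem_insert_self _ _, ?_⟩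
    rw [hO.eq_singleton_top hC htop, sum_singleton, sum_singleton]
    exact le_posPart _
  by_cases hhidden : ∃ b ∈ O, ∃ i, b i = none
  · obtain ⟨b, hb, i, hbi⟩ := hhidden
    obtain ⟨x, hx⟩ := exists_mem_splitB_top hk (ne_of_mem_of_not_mem hb htop) hbi
    refine ⟨splitB top x, mem_insert_of_mem (mem_image_of_mem _ (mem_univ x)), ?_⟩
    have hsub : {c ∈ O | ∃ i, c i = none} ⊆ splitB top x := fun c hc => by
      obtain ⟨hcO, j, hcj⟩ := mem_filter.1 hc
      exact hO.mem_splitB_top_of_mem_splitB_top hk hC htop hb hx hcO hcj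
    calc ∑ b ∈ O, f b = ∑ b ∈ O with ∃ i, b i = none, f b := hsum
      _ ≤ ∑ b ∈ O with ∃ i, b i = none, (f b)⁺ := sum_le_sum fun _ _ => le_posPart _
      _ ≤ ∑ b ∈ splitB top x, (f b)⁺ :=
        sum_le_sum_of_subset_of_nonneg hsub fun _ _ _ => posPart_nonneg _
  · refine ⟨{top}, mem_insert_self _ _, ?_⟩
    rw [hsum, filter_false_of_mem (by simpa using hhidden), sum_empty, sum_singleton]
    exact posPart_nonneg _

end

/-- With at most two attributes, the maximum of `∑_{b ∈ O} r b` over all attribute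
hiding schemes is attained by a tree-structured scheme. -/
theorem stmt7 (k : ℕ) (hk : k ≤ 2) (C : Fin k → ℕ) (hC : ∀ i, 2 ≤ C i)
    (n : ℕ) (hn : 2 ≤ n) (v : Fin n → (∀ i : Fin k, Fin (C i)) → ℝ) :
    ∃ Ostar : Finset (Bundle k C), IsTree k C Ostar ∧
      ∀ O : Finset (Bundle k C), IsScheme O →
        ∑ b ∈ O, rMarg hn v b ≤ ∑ b ∈ Ostar, rMarg hn v b := by
  have hC₀ : ∀ i, 0 < C i := fun i => by have := hC i; omega
  have hr : ∀ b : Bundle k C, (∀ i, b i ≠ none) → rMarg hn v b = 0 := fun _ => rMarg_eq_zero hn v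
  obtain ⟨T, hT, hTmax⟩ := (candidates k C).exists_max_image (fun T => ∑ b ∈ T, (rMarg hn v b)⁺)
    ⟨_, mem_insert_self _ _⟩
  obtain ⟨Ostar, hOstar, hsum⟩ := (isTree_of_mem_candidates hT).exists_sum_eq_sum_posPart hC₀ hr
  refine ⟨Ostar, hOstar, fun O hO => ?_⟩
  obtain ⟨T', hT', hle⟩ := hO.exists_candidate_sum_le hk hC₀ hr
  exact hle.trans ((hTmax T' hT').trans hsum.ge)
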